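/- With the data (k, 𝔛, V, d) and the auxiliary Lie algebra g̃ as in the context, assume 𝔛 has enough modules. Then the canonical Lie algebra homomorphism ι₀ : 𝔛 → g̃ (the composite of x ↦ (0,x) with the quotient map) is injective. -/

import Mathlib

/-! ## Semidirect product of Lie algebras along an action by derivations -/

variable (R : Type*) [CommRing R] (L : Type*) [LieRing L] [LieAlgebra R L]
  (M : Type*) [LieRing M] [LieAlgebra R M]

/-- Type synonym for the semidirect product of Lie algebras. -/
@[nolint unusedArguments]
def LieSemidirectProduct (_δ : M →ₗ⁅R⁆ LieDerivation R L L) : Type _ := L × M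

namespace LieSemidirectProduct

variable {R L M}
variable (δ : M →ₗ⁅R⁆ LieDerivation R L L)

instance : AddCommGroup (LieSemidirectProduct R L M δ) :=
  inferInstanceAs (AddCommGroup (L × M))

instance : Module R (LieSemidirectProduct R L M δ) :=
  inferInstanceAs (Module R (L × M))

/-- Build an element of the semidirect product. -/
def mk (t : L) (x : M) : LieSemidirectProduct R L M δ := (t, x)

@[simp] lemma mk_fst (t : L) (x : M) : (mk δ t x).1 = t := rfl
@[simp] lemma mk_snd (t : L) (x : M) : (mk δ t x).2 = x := rfl

instance : LieRing (LieSemidirectProduct R L M δ) where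
  bracket p q := (⁅p.1, q.1⁆ + δ p.2 q.1 - δ q.2 p.1, ⁅p.2, q.2⁆)
  add_lie p q r := by
    show Prod.mk _ _ = Prod.mk (_ + _) (_ + _)
    refine congrArg₂ Prod.mk ?_ (add_lie _ _ _)
    show ⁅p.1 + q.1, r.1⁆ + δ (p.2 + q.2) r.1 - δ r.2 (p.1 + q.1) = _
    simp only [add_lie, LieDerivation.add_apply, map_add]
    abel
  lie_add p q r := by
    show Prod.mk _ _ = Prod.mk (_ + _) (_ + _)
    refine congrArg₂ Prod.mk ?_ (lie_add _ _ _)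
    show ⁅p.1, q.1 + r.1⁆ + δ p.2 (q.1 + r.1) - δ (q.2 + r.2) p.1 = _
    simp only [lie_add, LieDerivation.add_apply, map_add]
    abel
  lie_self p := by
    show Prod.mk _ _ = (0 : L × M)
    rw [Prod.mk_eq_zero]
    constructor
    · show ⁅p.1, p.1⁆ + δ p.2 p.1 - δ p.2 p.1 = 0
      simp
    · exact lie_self _
  leibniz_lie p q r := by
    show Prod.mk _ _ = Prod.mk (_ + _) (_ + _)
    refine congrArg₂ Prod.mk ?_ (leibniz_lie _ _ _)
    show ⁅p.1, ⁅q.1, r.1⁆ + δ q.2 r.1 - δ r.2 q.1⁆ + δ p.2 (⁅q.1, r.1⁆ + δ q.2 r.1 - δ r.2 q.1)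
        - δ ⁅q.2, r.2⁆ p.1
      = (⁅⁅p.1, q.1⁆ + δ p.2 q.1 - δ q.2 p.1, r.1⁆ + δ ⁅p.2, q.2⁆ r.1
          - δ r.2 (⁅p.1, q.1⁆ + δ p.2 q.1 - δ q.2 p.1))
        + (⁅q.1, ⁅p.1, r.1⁆ + δ p.2 r.1 - δ r.2 p.1⁆ + δ q.2 (⁅p.1, r.1⁆ + δ p.2 r.1 - δ r.2 p.1)
          - δ ⁅p.2, r.2⁆ q.1)
    have hskew : ⁅δ r.2 p.1, q.1⁆ = -⁅q.1, δ r.2 p.1⁆ := (lie_skew _ _).symm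
    simp only [lie_add, add_lie, lie_sub, sub_lie, map_add, map_sub,
      LieHom.map_lie, LieDerivation.lie_apply, LieDerivation.apply_lie_eq_add, hskew,
      LieDerivation.add_apply, LieDerivation.sub_apply]
    rw [leibniz_lie p.1 q.1 r.1]
    abel

instance : LieAlgebra R (LieSemidirectProduct R L M δ) where
  lie_smul c p q := by
    show Prod.mk _ _ = Prod.mk (c • _) (c • _)
    refine congrArg₂ Prod.mk ?_ (lie_smul _ _ _)
    show ⁅p.1, c • q.1⁆ + δ p.2 (c • q.1) - δ (c • q.2) p.1 = c • (⁅p.1, q.1⁆ + δ p.2 q.1 - δ q.2 p.1)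
    simp only [lie_smul, LieDerivation.smul_apply, smul_add, smul_sub, map_smul]

@[simp] lemma bracket_def (p q : LieSemidirectProduct R L M δ) :
    ⁅p, q⁆ = (mk δ (⁅p.1, q.1⁆ + δ p.2 q.1 - δ q.2 p.1) ⁅p.2, q.2⁆) := rfl

/-- The canonical inclusion of `L` into the semidirect product. -/
def inl : L →ₗ⁅R⁆ LieSemidirectProduct R L M δ where
  toFun t := mk δ t 0
  map_add' t s := by
    show Prod.mk _ _ = Prod.mk (_ + _) (_ + _)
    simp [mk]
  map_smul' c t := by
    show Prod.mk _ _ = Prod.mk (c • _) (c • _)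
    simp [mk]
  map_lie' {t s} := by
    show mk δ ⁅t, s⁆ 0 = mk δ (⁅t, s⁆ + δ 0 s - δ 0 t) ⁅(0 : M), (0 : M)⁆
    simp [mk] <;> rfl

/-- The canonical inclusion of `M` into the semidirect product. -/
def inr : M →ₗ⁅R⁆ LieSemidirectProduct R L M δ where
  toFun x := mk δ 0 x
  map_add' x y := by
    show Prod.mk _ _ = Prod.mk (_ + _) (_ + _)
    simp [mk]
  map_smul' c x := by
    show Prod.mk _ _ = Prod.mk (c • _) (c • _)
    simp [mk]
  map_lie' {x y} := by
    show mk δ 0 ⁅x, y⁆ = mk δ (⁅(0 : L), (0 : L)⁆ + δ x 0 - δ y 0) ⁅x, y⁆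
    simp [mk] <;> rfl

end LieSemidirectProduct

/-! ## The contragredient construction -/

open TensorProduct

attribute [local instance] LieRing.ofAssociativeRing

namespace Contragredient

variable (k : Type*) [Field k]
variable {X : Type*} [LieRing X] [LieAlgebra k X]
variable (V : Type*) [AddCommGroup V] [Module k V]

/-- The action of `X` on the dual of `V` induced by a representation `φ`:
`(x · f) v = - f (x · v)`. -/
def dualAct (φ : X →ₗ⁅k⁆ Module.End k V) (x : X) (f : Module.Dual k V) :
    Module.Dual k V :=
  -(f ∘ₗ φ x)

/-- The free Lie algebra on `V ⊕ V*`: the Lie subalgebra of the tensor algebra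
(with commutator bracket) generated by `V ⊕ V*`. -/
def F : LieSubalgebra k (TensorAlgebra k (V × Module.Dual k V)) :=
  LieSubalgebra.lieSpan k _ (Set.range (TensorAlgebra.ι k))

/-- The canonical inclusion of `V ⊕ V*` into the free Lie algebra on it. -/
def ιF (w : V × Module.Dual k V) : F k V :=
  ⟨TensorAlgebra.ι k w, LieSubalgebra.subset_lieSpan ⟨w, rfl⟩⟩

variable {V}
variable (δ : X →ₗ⁅k⁆ LieDerivation k (F k V) (F k V))
variable (d : V ⊗[k] Module.Dual k V →ₗ[k] X)

/-- The semidirect product `FLie(V ⊕ V*) ⋊ X`. -/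
abbrev SD := LieSemidirectProduct k (F k V) X δ

/-- The defining relations of the auxiliary contragredient Lie algebra. -/
def rel : Set (SD k δ) :=
  { p | ∃ (v : V) (f : Module.Dual k V),
      p = LieSemidirectProduct.mk δ ⁅ιF k V (v, 0), ιF k V (0, f)⁆ (-(d (v ⊗ₜ[k] f))) }

/-- The ideal of relations. -/
def I0 : LieIdeal k (SD k δ) := LieSubmodule.lieSpan k _ (rel k δ d)

/-- The auxiliary contragredient Lie algebra `g̃(ρ, d)`. -/
abbrev gt := SD k δ ⧸ I0 k δ d

/-- The quotient map onto the auxiliary contragredient Lie algebra. -/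
def π : SD k δ →ₗ⁅k⁆ gt k δ d :=
  { (I0 k δ d).toSubmodule.mkQ with
    map_lie' := fun {_ _} => rfl }

/-- The canonical map from `X` to `g̃`. -/
def ι₀ : X →ₗ⁅k⁆ gt k δ d := (π k δ d).comp (LieSemidirectProduct.inr δ)

/-- The canonical map from `V` to `g̃`. -/
def gtV (v : V) : gt k δ d := π k δ d (LieSemidirectProduct.mk δ (ιF k V (v, 0)) 0)

/-- The canonical map from `V*` to `g̃`. -/
def gtD (f : Module.Dual k V) : gt k δ d :=
  π k δ d (LieSemidirectProduct.mk δ (ιF k V (0, f)) 0)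

/-- The positive subalgebra `n₊` of `g̃`: the Lie subalgebra generated by the image of `V`. -/
def nPlus : LieSubalgebra k (gt k δ d) :=
  LieSubalgebra.lieSpan k _ (Set.range (gtV k δ d))

/-- The negative subalgebra `n₋` of `g̃`: the Lie subalgebra generated by the image of `V*`. -/
def nMinus : LieSubalgebra k (gt k δ d) :=
  LieSubalgebra.lieSpan k _ (Set.range (gtD k δ d))

universe w

/-- `X` has enough modules: for every nonzero `x : X` there is a representation of `X`
on which `x` acts nontrivially. -/
def HasEnoughModules (k : Type*) [Field k] (X : Type*) [LieRing X] [LieAlgebra k X] : Prop :=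
  ∀ x : X, x ≠ 0 →
    ∃ (W : Type w) (_ : AddCommGroup W) (_ : Module k W)
      (ρW : X →ₗ⁅k⁆ Module.End k W), ρW x ≠ 0

end Contragredient

/-!
For a representation `ρ` of `𝔛` on `W`, an endomorphism `O` of the free `T(V*)`-module
`𝕄 = T(V*) ⊗ W` is determined by its values on `1 ⊗ W` and its commutators with left
multiplication by the generators `f ∈ V*`, and any such data linear in `f` occur. Let `f ∈ V*` act
on `𝕄` by left multiplication, `x ∈ 𝔛` by the endomorphism that is `ρ x` on `1 ⊗ W` with
`⁅x, f⁆ = x • f`, and `v ∈ V` by the one that kills `1 ⊗ W` with `⁅v, f⁆ = d (v ⊗ f)`. Comparing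
commutators with the generators (the Jacobi identity) shows that this is a representation of `𝔛`
and, since `d` is equivariant, that `⁅x, v⁆ = x • v`. So `FLie(V ⊕ V*) ⋊ 𝔛` acts on `𝕄`, the
defining relations act by `⁅v, f⁆ - d (v ⊗ f) = 0`, and `g̃` acts on `𝕄` with `ι₀ x` acting on
`1 ⊗ W` as `ρ x`. Hence `ι₀ x = 0` forces `ρ x = 0` for every `W`, so `x = 0` when `𝔛` has enough
modules.
-/

namespace LieSemidirectProduct

variable {R L M} {K : Type*} [LieRing K] [LieAlgebra R K] {δ : M →ₗ⁅R⁆ LieDerivation R L L}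

def lift (α : L →ₗ⁅R⁆ K) (β : M →ₗ⁅R⁆ K) (hαβ : ∀ m l, α (δ m l) = ⁅β m, α l⁆) :
    LieSemidirectProduct R L M δ →ₗ⁅R⁆ K where
  toFun p := α p.1 + β p.2
  map_add' p q := by
    change α (p.1 + q.1) + β (p.2 + q.2) = _
    rw [map_add, map_add]
    abel
  map_smul' c p := by
    change α (c • p.1) + β (c • p.2) = _
    rw [map_smul, map_smul, smul_add, RingHom.id_apply]
  map_lie' {p q} := by
    rw [bracket_def, mk_fst, mk_snd]
    simp only [map_add, map_sub, LieHom.map_lie, hαβ, lie_add, add_lie, ← lie_skew (β q.2)]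
    abel

@[simp] lemma lift_inr (α : L →ₗ⁅R⁆ K) (β : M →ₗ⁅R⁆ K) (hαβ : ∀ m l, α (δ m l) = ⁅β m, α l⁆)
    (x : M) : lift α β hαβ (inr δ x) = β x := by
  change α 0 + β x = β x
  rw [map_zero, zero_add]

end LieSemidirectProduct

namespace TensorAlgebra

open TensorProduct

variable {R} {D W : Type*} [AddCommGroup D] [Module R D] [AddCommGroup W] [Module R W]

local notation "𝕄" => TensorAlgebra R D ⊗[R] W
local notation "lmul" => Algebra.lsmul R R 𝕄

section TwistedEnd

variable (c : D →ₗ[R] Module.End R (TensorAlgebra R D ⊗[R] W))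

/- The endomorphism with commutators `⁅O, ι f •⁆ = c f` and values `O₀` on `1 ⊗ W` is the first
coordinate of the `T(D)`-linear map `𝕄 → 𝕄 × 𝕄` extending `w ↦ (O₀ w, 1 ⊗ w)`, where `ι f` acts on
`𝕄 × 𝕄` by the triangular matrix `[[ι f •, c f], [0, ι f •]]`. -/
def triangularRep : TensorAlgebra R D →ₐ[R] Module.End R (𝕄 × 𝕄) :=
  lift R
    { toFun f := (lmul (ι R f)).prodMap (lmul (ι R f)) +
        LinearMap.inl R _ _ ∘ₗ c f ∘ₗ LinearMap.snd R _ _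
      map_add' f g := by ext <;> simp
      map_smul' r f := by ext <;> simp }

lemma triangularRep_ι_apply (f : D) (p : 𝕄 × 𝕄) :
    triangularRep c (ι R f) p = (ι R f • p.1 + c f p.2, ι R f • p.2) := by
  simp [triangularRep]

lemma snd_triangularRep_apply (a : TensorAlgebra R D) (p : 𝕄 × 𝕄) :
    (triangularRep c a p).2 = a • p.2 := by
  induction a using TensorAlgebra.induction generalizing p with
  | algebraMap r => simp [Module.algebraMap_end_apply, algebraMap_smul]
  | ι f => simp [triangularRep_ι_apply]
  | mul a b ha hb => rw [map_mul, Module.End.mul_apply, ha, hb, mul_smul]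
  | add a b ha hb => rw [map_add, LinearMap.add_apply, Prod.snd_add, ha, hb, add_smul]

variable (O₀ : W →ₗ[R] TensorAlgebra R D ⊗[R] W)

def triangularLift : 𝕄 →ₗ[R] 𝕄 × 𝕄 :=
  TensorProduct.lift <|
    LinearMap.lcomp R _ (O₀.prod (TensorProduct.mk R _ W 1)) ∘ₗ (triangularRep c).toLinearMap

lemma triangularLift_tmul (a : TensorAlgebra R D) (w : W) :
    triangularLift c O₀ (a ⊗ₜ w) = triangularRep c a (O₀ w, 1 ⊗ₜ w) := rfl

lemma triangularLift_smul (a : TensorAlgebra R D) (u : 𝕄) :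
    triangularLift c O₀ (a • u) = triangularRep c a (triangularLift c O₀ u) := by
  induction u using TensorProduct.induction_on with
  | zero => simp
  | tmul b w =>
    rw [smul_tmul', smul_eq_mul, triangularLift_tmul, triangularLift_tmul, map_mul,
      Module.End.mul_apply]
  | add u u' hu hu' => simp only [smul_add, map_add, hu, hu']

lemma snd_triangularLift (u : 𝕄) : (triangularLift c O₀ u).2 = u := by
  induction u using TensorProduct.induction_on with
  | zero => simp
  | tmul a w => rw [triangularLift_tmul, snd_triangularRep_apply, smul_tmul', smul_eq_mul, mul_one]
  | add u u' hu hu' => simp only [map_add, Prod.snd_add, hu, hu']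

def twistedEnd : Module.End R 𝕄 :=
  LinearMap.fst R _ _ ∘ₗ triangularLift c O₀

@[simp] lemma twistedEnd_one_tmul (w : W) : twistedEnd c O₀ (1 ⊗ₜ w) = O₀ w := by
  simp [twistedEnd, triangularLift_tmul]

lemma twistedEnd_ι_smul (f : D) (u : 𝕄) :
    twistedEnd c O₀ (ι R f • u) = ι R f • twistedEnd c O₀ u + c f u := by
  simp only [twistedEnd, LinearMap.comp_apply, LinearMap.fst_apply, triangularLift_smul,
    triangularRep_ι_apply, snd_triangularLift]

lemma lie_twistedEnd_lmul_ι (f : D) : ⁅twistedEnd c O₀, lmul (ι R f)⁆ = c f := by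
  ext u
  simp [Ring.lie_def, twistedEnd_ι_smul]

end TwistedEnd

lemma ext_of_lie_lmul_ι {O O' : Module.End R 𝕄}
    (h : ∀ f : D, ⁅O, lmul (ι R f)⁆ = ⁅O', lmul (ι R f)⁆) (h₁ : ∀ w, O (1 ⊗ₜ w) = O' (1 ⊗ₜ w)) :
    O = O' := by
  have hcomm (a : TensorAlgebra R D) : Commute (O - O') (lmul a) := by
    induction a using TensorAlgebra.induction with
    | algebraMap r => rw [AlgHom.commutes]; exact Algebra.commute_algebraMap_right r _
    | ι f =>
      have hf := h f
      rw [Ring.lie_def, Ring.lie_def, ← sub_eq_sub_iff_sub_eq_sub] at hf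
      simpa only [Commute, SemiconjBy, sub_mul, mul_sub] using hf
    | mul a b ha hb => rw [map_mul]; exact ha.mul_right hb
    | add a b ha hb => rw [map_add]; exact ha.add_right hb
  rw [← sub_eq_zero]
  refine TensorProduct.ext' fun a w => ?_
  calc (O - O') (a ⊗ₜ w) = (O - O') (a • (1 ⊗ₜ w)) := by rw [smul_tmul', smul_eq_mul, mul_one]
    _ = a • (O - O') (1 ⊗ₜ w) := LinearMap.congr_fun (hcomm a).eq (1 ⊗ₜ w)
    _ = 0 := by rw [LinearMap.sub_apply, h₁, sub_self, smul_zero]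

lemma twistedEnd_add (c c' : D →ₗ[R] Module.End R 𝕄) (O₀ O₀' : W →ₗ[R] 𝕄) :
    twistedEnd (c + c') (O₀ + O₀') = twistedEnd c O₀ + twistedEnd c' O₀' :=
  ext_of_lie_lmul_ι (fun f => by simp [lie_twistedEnd_lmul_ι, add_lie]) (fun w => by simp)

lemma twistedEnd_smul (r : R) (c : D →ₗ[R] Module.End R 𝕄) (O₀ : W →ₗ[R] 𝕄) :
    twistedEnd (r • c) (r • O₀) = r • twistedEnd c O₀ :=
  ext_of_lie_lmul_ι (fun f => by
    rw [lie_twistedEnd_lmul_ι, LinearMap.smul_apply, ← lie_twistedEnd_lmul_ι c O₀ f,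
      Ring.lie_def, Ring.lie_def, smul_mul_assoc, mul_smul_comm, smul_sub]) (fun w => by simp)

end TensorAlgebra

namespace Contragredient

section InducedModule

open TensorAlgebra

variable {k : Type*} [Field k] {X : Type*} [LieRing X] [LieAlgebra k X]
  {V : Type*} [AddCommGroup V] [Module k V] {W : Type*} [AddCommGroup W] [Module k W]
  (φ : X →ₗ⁅k⁆ Module.End k V) (ρ : X →ₗ⁅k⁆ Module.End k W)

def ExtendsAction (δ : X →ₗ⁅k⁆ LieDerivation k (F k V) (F k V)) : Prop :=
  ∀ (x : X) (v : V) (f : Module.Dual k V),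
    ((δ x (ιF k V (v, f)) : F k V) : TensorAlgebra k (V × Module.Dual k V))
      = TensorAlgebra.ι k (φ x v, dualAct k V φ x f)

def IsEquivariant (d : V ⊗[k] Module.Dual k V →ₗ[k] X) : Prop :=
  ∀ (x : X) (v : V) (f : Module.Dual k V),
    ⁅x, d (v ⊗ₜ[k] f)⁆ = d (φ x v ⊗ₜ[k] f) + d (v ⊗ₜ[k] dualAct k V φ x f)

local notation "𝕄" => TensorAlgebra k (Module.Dual k V) ⊗[k] W
local notation "lmul" => Algebra.lsmul k k 𝕄

def dualRep : X →ₗ⁅k⁆ Module.End k (Module.Dual k V) :=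
  { toFun x := -(φ x).dualMap
    map_add' x y := by ext; simp; abel
    map_smul' r x := by ext; simp
    map_lie' := fun {x y} => by ext; simp [Ring.lie_def] }

def xAction : X →ₗ⁅k⁆ Module.End k 𝕄 where
  toFun x := twistedEnd ((lmul).toLinearMap ∘ₗ ι k ∘ₗ dualRep φ x)
    (TensorProduct.mk k _ W 1 ∘ₗ (ρ x : Module.End k W))
  map_add' x y := by simp only [map_add, LinearMap.comp_add, twistedEnd_add]
  map_smul' r x := by
    simp only [map_smul, LinearMap.comp_smul, twistedEnd_smul, RingHom.id_apply]
  map_lie' {x y} := by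
    refine ext_of_lie_lmul_ι (fun f => ?_) (fun w => ?_)
    · simp only [lie_lie, lie_twistedEnd_lmul_ι, LinearMap.comp_apply, AlgHom.toLinearMap_apply]
      rw [LieHom.map_lie, Ring.lie_def, LinearMap.sub_apply, map_sub, map_sub]
      rfl
    · simp [Ring.lie_def, TensorProduct.tmul_sub]

@[simp] lemma xAction_one_tmul (x : X) (w : W) :
    xAction φ ρ x (1 ⊗ₜ w) = 1 ⊗ₜ ρ x w :=
  twistedEnd_one_tmul _ _ w

lemma lie_xAction_lmul_ι (x : X) (f : Module.Dual k V) :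
    ⁅xAction φ ρ x, lmul (ι k f)⁆ = lmul (ι k (dualAct k V φ x f)) :=
  lie_twistedEnd_lmul_ι _ _ f

variable (d : V ⊗[k] Module.Dual k V →ₗ[k] X)

def vAction : V →ₗ[k] Module.End k 𝕄 where
  toFun v := twistedEnd ((xAction φ ρ).toLinearMap ∘ₗ d ∘ₗ TensorProduct.mk k V _ v) 0
  map_add' v v' := by
    rw [map_add, LinearMap.comp_add, LinearMap.comp_add, ← twistedEnd_add, add_zero]
  map_smul' r v := by
    rw [map_smul, LinearMap.comp_smul, LinearMap.comp_smul, RingHom.id_apply, ← twistedEnd_smul,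
      smul_zero]

@[simp] lemma vAction_one_tmul (v : V) (w : W) : vAction φ ρ d v (1 ⊗ₜ w) = 0 :=
  twistedEnd_one_tmul _ _ w

lemma lie_vAction_lmul_ι (v : V) (f : Module.Dual k V) :
    ⁅vAction φ ρ d v, lmul (ι k f)⁆ = xAction φ ρ (d (v ⊗ₜ f)) :=
  lie_twistedEnd_lmul_ι _ _ f

variable {d} in
lemma lie_xAction_vAction (hd : IsEquivariant φ d) (x : X) (v : V) :
    ⁅xAction φ ρ x, vAction φ ρ d v⁆ = vAction φ ρ d (φ x v) := by
  refine ext_of_lie_lmul_ι (fun f => ?_) (fun w => ?_)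
  · rw [lie_lie, lie_vAction_lmul_ι, lie_xAction_lmul_ι, lie_vAction_lmul_ι, ← LieHom.map_lie,
      lie_vAction_lmul_ι, hd, map_add, add_sub_cancel_right]
  · simp [Ring.lie_def]

def tensorAction : TensorAlgebra k (V × Module.Dual k V) →ₐ[k] Module.End k 𝕄 :=
  lift k (vAction φ ρ d ∘ₗ LinearMap.fst k _ _ + (lmul).toLinearMap ∘ₗ ι k ∘ₗ LinearMap.snd k _ _)

lemma tensorAction_ι (v : V) (f : Module.Dual k V) :
    tensorAction φ ρ d (ι k (v, f)) = vAction φ ρ d v + lmul (ι k f) := by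
  simp [tensorAction]

lemma F.induction {p : F k V → Prop} (hι : ∀ w, p (ιF k V w))
    (hadd : ∀ s t, p s → p t → p (s + t)) (hsmul : ∀ (r : k) s, p s → p (r • s))
    (hlie : ∀ s t, p s → p t → p ⁅s, t⁆) (s : F k V) : p s := by
  obtain ⟨s, hs⟩ := s
  induction hs using LieSubalgebra.lieSpan_induction with
  | mem s hs => obtain ⟨w, rfl⟩ := hs; exact hι w
  | zero =>
    have h0 := hsmul 0 _ (hι 0)
    rwa [zero_smul] at h0
  | add s t _ _ hs ht => exact hadd _ _ hs ht
  | smul r s _ hs => exact hsmul r _ hs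
  | lie s t _ _ hs ht => exact hlie _ _ hs ht

def freeLieAction : F k V →ₗ⁅k⁆ Module.End k 𝕄 :=
  (tensorAction φ ρ d).toLieHom.comp (F k V).incl

lemma freeLieAction_ιF (v : V) (f : Module.Dual k V) :
    freeLieAction φ ρ d (ιF k V (v, f)) = vAction φ ρ d v + lmul (ι k f) :=
  tensorAction_ι φ ρ d v f

variable {φ d}

lemma freeLieAction_derivation_apply (δ : X →ₗ⁅k⁆ LieDerivation k (F k V) (F k V))
    (hδ : ExtendsAction φ δ) (hd : IsEquivariant φ d) (x : X) (s : F k V) :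
    freeLieAction φ ρ d (δ x s) = ⁅xAction φ ρ x, freeLieAction φ ρ d s⁆ := by
  induction s using F.induction with
  | hι w =>
    have hδw : δ x (ιF k V w) = ιF k V (φ x w.1, dualAct k V φ x w.2) :=
      Subtype.ext (hδ x w.1 w.2)
    rw [hδw, freeLieAction_ιF, freeLieAction_ιF, lie_add, lie_xAction_vAction φ ρ hd,
      lie_xAction_lmul_ι]
  | hadd s t hs ht => rw [map_add, map_add, hs, ht, map_add, lie_add]
  | hsmul r s hs =>
    rw [map_smul, map_smul, hs, map_smul, Ring.lie_def, Ring.lie_def, mul_smul_comm,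
      smul_mul_assoc, smul_sub]
  | hlie s t hs ht =>
    rw [LieDerivation.apply_lie_eq_add, map_add, LieHom.map_lie, LieHom.map_lie, hs, ht,
      LieHom.map_lie, leibniz_lie (xAction φ ρ x), add_comm]

lemma lift_freeLieAction_xAction_of_mem_rel (δ : X →ₗ⁅k⁆ LieDerivation k (F k V) (F k V))
    (hδ : ExtendsAction φ δ) (hd : IsEquivariant φ d)
    {p : SD k δ} (hp : p ∈ rel k δ d) :
    LieSemidirectProduct.lift (freeLieAction φ ρ d) (xAction φ ρ)
      (freeLieAction_derivation_apply ρ δ hδ hd) p = 0 := by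
  obtain ⟨v, f, rfl⟩ := hp
  change freeLieAction φ ρ d ⁅ιF k V (v, 0), ιF k V (0, f)⁆ + xAction φ ρ (-d (v ⊗ₜ f)) = 0
  rw [LieHom.map_lie, freeLieAction_ιF, freeLieAction_ιF, map_zero, map_zero, map_zero, add_zero,
    zero_add, lie_vAction_lmul_ι, map_neg, add_neg_cancel]

lemma xAction_eq_zero_of_ι₀_eq_zero (δ : X →ₗ⁅k⁆ LieDerivation k (F k V) (F k V))
    (hδ : ExtendsAction φ δ) (hd : IsEquivariant φ d)
    {x : X} (hx : ι₀ k δ d x = 0) : xAction φ ρ x = 0 := by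
  let Φ := LieSemidirectProduct.lift _ _ (freeLieAction_derivation_apply ρ δ hδ hd)
  have hI0 : I0 k δ d ≤ Φ.ker :=
    LieSubmodule.lieSpan_le.mpr fun _ hp => lift_freeLieAction_xAction_of_mem_rel ρ δ hδ hd hp
  have hmem : LieSemidirectProduct.inr δ x ∈ I0 k δ d := (Submodule.Quotient.mk_eq_zero _).mp hx
  have hΦ : Φ (LieSemidirectProduct.inr δ x) = 0 := hI0 hmem
  rwa [LieSemidirectProduct.lift_inr] at hΦ

lemma eq_zero_of_xAction_eq_zero {x : X} (hx : xAction φ ρ x = 0) : ρ x = 0 :=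
  LinearMap.ext fun w => by
    simpa only [LinearMap.zero_apply, xAction_one_tmul, Module.FaithfullyFlat.one_tmul_eq_zero_iff]
      using LinearMap.congr_fun hx (1 ⊗ₜ w)

end InducedModule

theorem iota_zero_injective_general
    {k : Type*} [Field k]
    {X : Type*} [LieRing X] [LieAlgebra k X]
    {V : Type*} [AddCommGroup V] [Module k V]
    (φ : X →ₗ⁅k⁆ Module.End k V)
    (δ : X →ₗ⁅k⁆ LieDerivation k (F k V) (F k V))
    (hδ : ∀ (x : X) (v : V) (f : Module.Dual k V),
      ((δ x (ιF k V (v, f)) : F k V) : TensorAlgebra k (V × Module.Dual k V))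
        = TensorAlgebra.ι k (φ x v, dualAct k V φ x f))
    (d : V ⊗[k] Module.Dual k V →ₗ[k] X)
    (hd : ∀ (x : X) (v : V) (f : Module.Dual k V),
      ⁅x, d (v ⊗ₜ[k] f)⁆ = d (φ x v ⊗ₜ[k] f) + d (v ⊗ₜ[k] dualAct k V φ x f))
    (henough : HasEnoughModules.{w} k X) :
    Function.Injective (ι₀ k δ d) := by
  refine (injective_iff_map_eq_zero (ι₀ k δ d)).mpr fun x hx => ?_
  by_contra hx0
  obtain ⟨W, _, _, ρ, hρ⟩ := henough x hx0
  exact hρ (eq_zero_of_xAction_eq_zero ρ (xAction_eq_zero_of_ι₀_eq_zero ρ δ hδ hd hx))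

/-- If `𝔛` has enough modules, the canonical map `ι₀ : 𝔛 → g̃(ρ, d)` from `𝔛` to the auxiliary
contragredient Lie algebra is injective.  Here `φ` is the representation of `𝔛` on `V`, `δ` is
the extension of the actions of `𝔛` on `V` and `V*` to an action on the free Lie algebra
`FLie(V ⊕ V*)` by derivations, and `d : V ⊗ V* → 𝔛` is a morphism of `𝔛`-modules. -/
theorem iota_zero_injective
    {k : Type*} [Field k]
    {X : Type*} [LieRing X] [LieAlgebra k X] [FiniteDimensional k X]
    {V : Type*} [AddCommGroup V] [Module k V] [FiniteDimensional k V]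
    (φ : X →ₗ⁅k⁆ Module.End k V)
    (δ : X →ₗ⁅k⁆ LieDerivation k (F k V) (F k V))
    (hδ : ∀ (x : X) (v : V) (f : Module.Dual k V),
      ((δ x (ιF k V (v, f)) : F k V) : TensorAlgebra k (V × Module.Dual k V))
        = TensorAlgebra.ι k (φ x v, dualAct k V φ x f))
    (d : V ⊗[k] Module.Dual k V →ₗ[k] X)
    (hd : ∀ (x : X) (v : V) (f : Module.Dual k V),
      ⁅x, d (v ⊗ₜ[k] f)⁆ = d (φ x v ⊗ₜ[k] f) + d (v ⊗ₜ[k] dualAct k V φ x f))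
    (henough : HasEnoughModules.{w} k X) :
    Function.Injective (ι₀ k δ d) :=
  iota_zero_injective_general φ δ hδ d hd henough

end Contragredient
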